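/- For every integer n ≥ 0, consider the action of the reversal map β on the set of edges of the Fibonacci cube Γ_n, i.e., on unordered pairs {u, v} of Fibonacci strings of length n differing in exactly one position, with β({u,v}) = {β(u), β(v)}. Then: the number of edge orbits of size 1 equals ((1−(−1)^n)/2)·F_{⌊(n+1)/2⌋}; the number of edge orbits of size 2 equals (1/10)(n·F_{n+1} + 2(n+1)·F_n) − ((1−(−1)^n)/4)·F_{⌊(n+1)/2⌋}; and the total number of edge orbits equals (1/10)(n·F_{n+1} + 2(n+1)·F_n) + ((1−(−1)^n)/4)·F_{⌊(n+1)/2⌋}. -/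

import Mathlib

open scoped Classical

/-- Cyclic shift `α`: maps `u₁u₂⋯uₙ` to `uₙu₁⋯uₙ₋₁`. -/
def cyc {α : Type*} (u : List α) : List α := u.rotate (u.length - 1)

/-- `listPow v k` is the concatenation of `k` copies of `v`. -/
def listPow {α : Type*} (v : List α) (k : ℕ) : List α := (List.replicate k v).flatten

/-- The period of `u`: the least `k > 0` with `cyc^[k] u = u`. -/
noncomputable def period {α : Type*} (u : List α) : ℕ := sInf {k | 0 < k ∧ cyc^[k] u = u}

/-- `u` is primitive if it is not the concatenation of `k ≥ 2` copies of a shorter string. -/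
def IsPrimitive {α : Type*} (u : List α) : Prop :=
  ∀ (v : List α) (k : ℕ), 2 ≤ k → v.length < u.length → u ≠ listPow v k

/-- The dihedral orbit of `u`: `{α^j(u) : 0 ≤ j < n} ∪ {α^j(β(u)) : 0 ≤ j < n}`,
where `β` is reversal. -/
noncomputable def dihedralOrbit {α : Type*} [DecidableEq α] (u : List α) : Finset (List α) :=
  ((Finset.range u.length).image fun j => cyc^[j] u) ∪
    ((Finset.range u.length).image fun j => cyc^[j] u.reverse)

/-- Lucas numbers: `L₀ = 2`, `L₁ = 1`, `Lₙ = Lₙ₋₁ + Lₙ₋₂`. -/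
def lucas : ℕ → ℕ
  | 0 => 2
  | 1 => 1
  | n + 2 => lucas (n + 1) + lucas n

/-- All binary strings of length `n`, as a finset of boolean lists. -/
def allBool (n : ℕ) : Finset (List Bool) :=
  (Finset.univ : Finset (Fin n → Bool)).image fun f => List.ofFn f

/-- A Fibonacci string: a binary string with no two consecutive 1s. -/
def IsFibStr (l : List Bool) : Prop := l.Chain' fun a b => a = false ∨ b = false

/-- The Fibonacci strings of length `n` (vertices of the Fibonacci cube `Γₙ`). -/
noncomputable def fibStrings (n : ℕ) : Finset (List Bool) := (allBool n).filter IsFibStr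

/-- A Lucas string: a binary string with no two consecutive 1s which does not both
begin and end with 1. -/
def IsLucasStr (l : List Bool) : Prop :=
  IsFibStr l ∧ ¬(l.head? = some true ∧ l.getLast? = some true)

/-- The Lucas strings of length `n` (vertices of the Lucas cube `Λₙ`). -/
noncomputable def lucasStrings (n : ℕ) : Finset (List Bool) := (allBool n).filter IsLucasStr

/-- Two strings differ in exactly one position. -/
def DifferOne (u v : List Bool) : Prop :=
  u.length = v.length ∧ (List.zipWith (fun a b => a != b) u v).count true = 1

/-- The edges of the Fibonacci cube `Γₙ`, as unordered pairs of vertices. -/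
noncomputable def fibEdges (n : ℕ) : Finset (Finset (List Bool)) :=
  ((fibStrings n ×ˢ fibStrings n).filter fun p => DifferOne p.1 p.2).image fun p => {p.1, p.2}

/-- The edges of the Lucas cube `Λₙ`, as unordered pairs of vertices. -/
noncomputable def lucasEdges (n : ℕ) : Finset (Finset (List Bool)) :=
  ((lucasStrings n ×ˢ lucasStrings n).filter fun p => DifferOne p.1 p.2).image fun p => {p.1, p.2}

/-- The orbit of a vertex under the reversal map `β`. -/
def revOrbit (u : List Bool) : Finset (List Bool) := {u, u.reverse}

/-- The orbit of an edge under the reversal map `β`, acting by `β({u,v}) = {β(u),β(v)}`. -/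
def revEdgeOrbit (e : Finset (List Bool)) : Finset (Finset (List Bool)) :=
  {e, e.image List.reverse}

/-- The orbit of an edge under the dihedral action on strings of length `n`:
`{α^j(e) : 0 ≤ j < n} ∪ {α^j(β(e)) : 0 ≤ j < n}`. -/
noncomputable def dihedralEdgeOrbit (n : ℕ) (e : Finset (List Bool)) :
    Finset (Finset (List Bool)) :=
  ((Finset.range n).image fun j => e.image fun u => cyc^[j] u) ∪
    ((Finset.range n).image fun j => e.image fun u => cyc^[j] u.reverse)

/-!
Every edge of `Γₙ` is `{a0b, a1b}` for a unique pair `(a, b)` with `a1b` a Fibonacci string, so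
edges are Fibonacci strings with a marked `1`; splitting at the mark gives
`|E(Γₙ)| = ∑_{i<n} F_{i+1} F_{n-i}`, and this convolution satisfies
`5 ∑_{i<n} F_{i+1} F_{n-i} = n F_{n+1} + 2(n+1) F_n`.
Reversal sends the edge of `(a, b)` to the edge of `(bᴿ, aᴿ)`, so an edge is fixed iff
`b = aᴿ`, which forces `n = 2m + 1` and leaves `F_{m+1}` choices for `a`.
As `β` is an involution, orbits of size 1 are the fixed edges and the remaining edges pair up
into orbits of size 2, which determines all three counts.
-/

section InvolutionOrbits

variable {α : Type*} [DecidableEq α] (f : α → α) (s : Finset α)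

def pairOrbit (x : α) : Finset α := {x, f x}

lemma card_pairOrbit_eq_one_iff {x : α} : (pairOrbit f x).card = 1 ↔ f x = x := by
  by_cases h : f x = x
  · simp [pairOrbit, h]
  · simp [pairOrbit, h, Finset.card_pair (Ne.symm h)]

lemma card_pairOrbit_eq_two_iff {x : α} : (pairOrbit f x).card = 2 ↔ f x ≠ x := by
  by_cases h : f x = x
  · simp [pairOrbit, h]
  · simp [pairOrbit, h, Finset.card_pair (Ne.symm h)]

lemma card_filter_image_pairOrbit_card_eq_one :
    ((s.image (pairOrbit f)).filter fun O => O.card = 1).card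
      = (s.filter fun x => f x = x).card := by
  rw [Finset.filter_image, Finset.filter_congr fun x _ => card_pairOrbit_eq_one_iff f,
    Finset.card_image_of_injOn]
  intro x hx y hy hxy
  simp only [Finset.coe_filter, Set.mem_ofPred_eq] at hx hy
  simpa [pairOrbit, hx.2, hy.2] using hxy

lemma filter_image_pairOrbit_card_ne_one :
    ((s.image (pairOrbit f)).filter fun O => ¬O.card = 1)
      = (s.image (pairOrbit f)).filter fun O => O.card = 2 := by
  refine Finset.filter_congr fun O hO => ?_
  obtain ⟨x, -, rfl⟩ := Finset.mem_image.1 hO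
  rw [card_pairOrbit_eq_one_iff, card_pairOrbit_eq_two_iff]

lemma card_image_pairOrbit :
    (s.image (pairOrbit f)).card
      = ((s.image (pairOrbit f)).filter fun O => O.card = 1).card
        + ((s.image (pairOrbit f)).filter fun O => O.card = 2).card := by
  rw [← filter_image_pairOrbit_card_ne_one, Finset.card_filter_add_card_filter_not]

variable {f s}

lemma filter_pairOrbit_eq_pairOrbit (hf : Function.Involutive f) (hs : Set.MapsTo f s s)
    {x : α} (hx : x ∈ s) :
    (s.filter fun y => pairOrbit f y = pairOrbit f x) = pairOrbit f x := by
  ext y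
  rw [Finset.mem_filter]
  simp only [pairOrbit, Finset.mem_insert, Finset.mem_singleton]
  constructor
  · rintro ⟨-, hy⟩
    have : y ∈ ({x, f x} : Finset α) := hy ▸ Finset.mem_insert_self y {f y}
    simpa using this
  · rintro (rfl | rfl)
    · exact ⟨hx, rfl⟩
    · exact ⟨hs hx, by rw [hf x, Finset.pair_comm]⟩

lemma card_eq_sum_card_pairOrbit (hf : Function.Involutive f) (hs : Set.MapsTo f s s) :
    s.card = ∑ O ∈ s.image (pairOrbit f), O.card := by
  rw [Finset.card_eq_sum_card_image (pairOrbit f)]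
  refine Finset.sum_congr rfl fun O hO => ?_
  obtain ⟨x, hx, rfl⟩ := Finset.mem_image.1 hO
  rw [filter_pairOrbit_eq_pairOrbit hf hs hx]

lemma card_eq_card_fixed_add_two_mul (hf : Function.Involutive f) (hs : Set.MapsTo f s s) :
    s.card = (s.filter fun x => f x = x).card
      + 2 * ((s.image (pairOrbit f)).filter fun O => O.card = 2).card := by
  rw [card_eq_sum_card_pairOrbit hf hs, ← card_filter_image_pairOrbit_card_eq_one,
    ← Finset.sum_filter_add_sum_filter_not _ fun O : Finset α => O.card = 1,
    filter_image_pairOrbit_card_ne_one, Finset.sum_const_nat fun _ h => (Finset.mem_filter.1 h).2,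
    Finset.sum_const_nat fun _ h => (Finset.mem_filter.1 h).2, mul_one, mul_comm]

end InvolutionOrbits

section FibonacciStrings

lemma mem_allBool {n : ℕ} {l : List Bool} : l ∈ allBool n ↔ l.length = n := by
  constructor
  · rintro h
    obtain ⟨f, -, rfl⟩ := Finset.mem_image.1 h
    exact List.length_ofFn
  · rintro rfl
    exact Finset.mem_image.2 ⟨l.get, Finset.mem_univ _, List.ofFn_get l⟩

lemma mem_fibStrings {n : ℕ} {l : List Bool} :
    l ∈ fibStrings n ↔ l.length = n ∧ IsFibStr l := by
  rw [fibStrings, Finset.mem_filter, mem_allBool]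

lemma isFibStr_iff_isChain {l : List Bool} :
    IsFibStr l ↔ l.IsChain fun a b => a = false ∨ b = false :=
  Iff.rfl

lemma isFibStr_cons_false {l : List Bool} : IsFibStr (false :: l) ↔ IsFibStr l := by
  simp [isFibStr_iff_isChain, List.isChain_cons]

lemma isFibStr_cons_true_cons {x : Bool} {l : List Bool} :
    IsFibStr (true :: x :: l) ↔ x = false ∧ IsFibStr (x :: l) := by
  simp [isFibStr_iff_isChain, List.isChain_cons_cons]

lemma isFibStr_reverse {l : List Bool} : IsFibStr l.reverse ↔ IsFibStr l := by
  simp only [isFibStr_iff_isChain, List.isChain_reverse, or_comm]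

lemma isFibStr_append_cons {a b : List Bool} {x : Bool} :
    IsFibStr (a ++ x :: b) ↔ IsFibStr (a ++ [x]) ∧ IsFibStr (x :: b) :=
  List.isChain_split

noncomputable def fibAfter (n : ℕ) : Finset (List Bool) :=
  (allBool n).filter fun b => IsFibStr (true :: b)

noncomputable def fibBefore (n : ℕ) : Finset (List Bool) :=
  (allBool n).filter fun a => IsFibStr (a ++ [true])

lemma mem_fibAfter {n : ℕ} {b : List Bool} :
    b ∈ fibAfter n ↔ b.length = n ∧ IsFibStr (true :: b) := by
  rw [fibAfter, Finset.mem_filter, mem_allBool]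

lemma mem_fibBefore {n : ℕ} {a : List Bool} :
    a ∈ fibBefore n ↔ a.length = n ∧ IsFibStr (a ++ [true]) := by
  rw [fibBefore, Finset.mem_filter, mem_allBool]

lemma fibStrings_zero : fibStrings 0 = {[]} := by
  ext l
  simp only [mem_fibStrings, List.length_eq_zero_iff, Finset.mem_singleton, and_iff_left_iff_imp]
  rintro rfl
  exact List.IsChain.nil

lemma fibAfter_zero : fibAfter 0 = {[]} := by
  ext l
  simp only [mem_fibAfter, List.length_eq_zero_iff, Finset.mem_singleton, and_iff_left_iff_imp]
  rintro rfl
  exact List.IsChain.singleton true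

lemma fibStrings_succ (n : ℕ) :
    fibStrings (n + 1)
      = (fibStrings n).image (false :: ·) ∪ (fibAfter n).image (true :: ·) := by
  ext (_ | ⟨x, t⟩)
  · simp [mem_fibStrings]
  · cases x <;> simp [mem_fibStrings, mem_fibAfter, isFibStr_cons_false]

lemma fibAfter_succ (n : ℕ) : fibAfter (n + 1) = (fibStrings n).image (false :: ·) := by
  ext (_ | ⟨x, t⟩)
  · simp [mem_fibAfter]
  · cases x <;> simp [mem_fibStrings, mem_fibAfter, isFibStr_cons_true_cons, isFibStr_cons_false]

lemma card_fibStrings_succ (n : ℕ) :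
    (fibStrings (n + 1)).card = (fibStrings n).card + (fibAfter n).card := by
  rw [fibStrings_succ, Finset.card_union_of_disjoint,
    Finset.card_image_of_injective _ List.cons_injective,
    Finset.card_image_of_injective _ List.cons_injective]
  simp [Finset.disjoint_left]

lemma card_fibAfter_succ (n : ℕ) : (fibAfter (n + 1)).card = (fibStrings n).card := by
  rw [fibAfter_succ, Finset.card_image_of_injective _ List.cons_injective]

lemma card_fibStrings_and_fibAfter (n : ℕ) :
    (fibStrings n).card = Nat.fib (n + 2) ∧ (fibAfter n).card = Nat.fib (n + 1) := by
  induction n with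
  | zero => simp [fibStrings_zero, fibAfter_zero]
  | succ n ih =>
    rw [card_fibStrings_succ, card_fibAfter_succ, ih.1, ih.2, Nat.fib_add_two (n := n + 1)]
    exact ⟨Nat.add_comm _ _, rfl⟩

lemma card_fibAfter (n : ℕ) : (fibAfter n).card = Nat.fib (n + 1) :=
  (card_fibStrings_and_fibAfter n).2

lemma fibBefore_eq_image_reverse (n : ℕ) : fibBefore n = (fibAfter n).image List.reverse := by
  ext a
  simp only [Finset.mem_image, mem_fibBefore, mem_fibAfter]
  constructor
  · rintro ⟨hlen, hfib⟩
    refine ⟨a.reverse, ⟨by simp [hlen], ?_⟩, a.reverse_reverse⟩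
    simpa using isFibStr_reverse.2 hfib
  · rintro ⟨b, ⟨hlen, hfib⟩, rfl⟩
    exact ⟨by simp [hlen], by simpa using isFibStr_reverse.2 hfib⟩

lemma card_fibBefore (n : ℕ) : (fibBefore n).card = Nat.fib (n + 1) := by
  rw [fibBefore_eq_image_reverse, Finset.card_image_of_injective _ List.reverse_injective,
    card_fibAfter]

end FibonacciStrings

section FibonacciConvolution

def fibConv (n : ℕ) : ℕ := ∑ i ∈ Finset.range n, Nat.fib (i + 1) * Nat.fib (n - i)

lemma fibConv_add_two (n : ℕ) :
    fibConv (n + 2) = fibConv (n + 1) + fibConv n + Nat.fib (n + 2) := by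
  have hsplit : ∑ i ∈ Finset.range (n + 1), Nat.fib (i + 1) * Nat.fib (n + 2 - i)
      = fibConv (n + 1) + ∑ i ∈ Finset.range (n + 1), Nat.fib (i + 1) * Nat.fib (n - i) := by
    rw [fibConv, ← Finset.sum_add_distrib]
    refine Finset.sum_congr rfl fun i hi => ?_
    rw [show n + 2 - i = n - i + 2 by grind, Nat.fib_add_two, show n - i + 1 = n + 1 - i by grind]
    ring
  rw [fibConv, Finset.sum_range_succ, hsplit, Finset.sum_range_succ]
  simp [fibConv]

lemma five_mul_fibConv (n : ℕ) :
    5 * fibConv n = n * Nat.fib (n + 1) + 2 * (n + 1) * Nat.fib n := by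
  induction n using Nat.twoStepInduction with
  | zero => simp [fibConv]
  | one => simp [fibConv]
  | more n ih₀ ih₁ =>
    rw [fibConv_add_two, mul_add, mul_add, ih₀, ih₁, Nat.fib_add_two (n := n + 1),
      Nat.fib_add_two (n := n)]
    ring

end FibonacciConvolution

section MarkedStrings

/-- Fibonacci strings of length `n` with a marked `1`, encoded as the pair `(a, b)` around it. -/
noncomputable def markedFibStrings (n : ℕ) : Finset (List Bool × List Bool) :=
  (Finset.range n).biUnion fun i => fibBefore i ×ˢ fibAfter (n - 1 - i)

lemma mem_markedFibStrings {n : ℕ} {a b : List Bool} :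
    (a, b) ∈ markedFibStrings n
      ↔ a.length + b.length + 1 = n ∧ IsFibStr (a ++ true :: b) := by
  rw [isFibStr_append_cons]
  simp only [markedFibStrings, Finset.mem_biUnion, Finset.mem_range, Finset.mem_product,
    mem_fibBefore, mem_fibAfter]
  constructor
  · rintro ⟨i, hi, ⟨rfl, ha⟩, hlen, hb⟩
    exact ⟨by omega, ha, hb⟩
  · rintro ⟨hlen, ha, hb⟩
    exact ⟨a.length, by omega, ⟨rfl, ha⟩, by omega, hb⟩

lemma card_markedFibStrings (n : ℕ) : (markedFibStrings n).card = fibConv n := by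
  rw [markedFibStrings, fibConv, Finset.card_biUnion]
  · refine Finset.sum_congr rfl fun i hi => ?_
    have hi := Finset.mem_range.1 hi
    rw [Finset.card_product, card_fibBefore, card_fibAfter, show n - 1 - i + 1 = n - i by omega]
  · intro i _ j _ hij
    simp only [Function.onFun, Finset.disjoint_left, Finset.mem_product, mem_fibBefore]
    rintro ⟨a, b⟩ ⟨⟨rfl, -⟩, -⟩ ⟨⟨rfl, -⟩, -⟩
    exact hij rfl

end MarkedStrings

section CubeEdges

def cubeEdge (a b : List Bool) : Finset (List Bool) := {a ++ false :: b, a ++ true :: b}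

lemma length_eq_of_append_cons_eq {α : Type*} {a b c d : List α} {x x' y y' : α} (hxy : x ≠ y)
    (h₁ : a ++ x :: b = c ++ x' :: d) (h₂ : a ++ y :: b = c ++ y' :: d) :
    a.length = c.length := by
  rcases lt_trichotomy a.length c.length with hlt | heq | hgt
  · have e₁ := congrArg (·[a.length]?) h₁
    have e₂ := congrArg (·[a.length]?) h₂
    simp only [List.getElem?_append_left hlt, List.getElem?_append_right le_rfl, Nat.sub_self,
      List.getElem?_cons_zero] at e₁ e₂
    exact (hxy (Option.some_injective _ (e₁.trans e₂.symm))).elim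
  · exact heq
  · have e₁ := congrArg (·[c.length]?) h₁
    have e₂ := congrArg (·[c.length]?) h₂
    simp only [List.getElem?_append_left hgt, List.getElem?_append_right le_rfl, Nat.sub_self,
      List.getElem?_cons_zero] at e₁ e₂
    obtain rfl : x' = y' := Option.some_injective _ (e₁.symm.trans e₂)
    exact (hxy (by simpa using h₁.trans h₂.symm)).elim

lemma cubeEdge_injective :
    Function.Injective fun p : List Bool × List Bool => cubeEdge p.1 p.2 := by
  rintro ⟨a, b⟩ ⟨c, d⟩ h
  replace h : cubeEdge a b = cubeEdge c d := h
  have hlow : a ++ false :: b ∈ cubeEdge c d := h ▸ Finset.mem_insert_self _ _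
  have hup : a ++ true :: b ∈ cubeEdge c d :=
    h ▸ Finset.mem_insert_of_mem (Finset.mem_singleton_self _)
  simp only [cubeEdge, Finset.mem_insert, Finset.mem_singleton] at hlow hup
  rcases hlow with hlow | hlow <;> rcases hup with hup | hup <;>
  · have hlen := length_eq_of_append_cons_eq Bool.false_ne_true hlow hup
    obtain ⟨rfl, hlow⟩ := List.append_inj hlow hlen
    obtain ⟨-, hup⟩ := List.append_inj hup hlen
    simp_all

end CubeEdges

section DifferOne

lemma eq_of_count_zipWith_bne_eq_zero {u v : List Bool} (hlen : u.length = v.length)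
    (h : (List.zipWith (fun a b => a != b) u v).count true = 0) : u = v := by
  induction u generalizing v with
  | nil => exact (List.length_eq_zero_iff.1 hlen.symm).symm
  | cons x u ih =>
    obtain ⟨y, v, rfl⟩ := List.exists_cons_of_length_eq_add_one hlen.symm
    simp only [List.zipWith_cons_cons, List.count_cons, Nat.add_eq_zero_iff] at h
    obtain rfl : x = y := by cases x <;> cases y <;> simp_all
    rw [ih (by simpa using hlen) h.1]

lemma DifferOne.exists_eq_append_cons {u v : List Bool} (h : DifferOne u v) :
    ∃ a b x, u = a ++ x :: b ∧ v = a ++ (!x) :: b := by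
  obtain ⟨hlen, hcount⟩ := h
  induction u generalizing v with
  | nil => simp [List.length_eq_zero_iff.1 hlen.symm] at hcount
  | cons x u ih =>
    obtain ⟨y, v, rfl⟩ := List.exists_cons_of_length_eq_add_one hlen.symm
    simp only [List.length_cons, add_left_inj] at hlen
    by_cases hxy : x = y
    · subst hxy
      obtain ⟨a, b, z, rfl, rfl⟩ := ih hlen (by simpa using hcount)
      exact ⟨x :: a, b, z, rfl, rfl⟩
    · obtain rfl : y = !x := by cases x <;> cases y <;> simp_all
      refine ⟨[], u, x, rfl, ?_⟩
      have hne : (x != !x) = true := by cases x <;> rfl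
      simp only [List.zipWith_cons_cons, List.count_cons, hne, beq_self_eq_true, if_true,
        add_eq_right] at hcount
      rw [eq_of_count_zipWith_bne_eq_zero hlen hcount, List.nil_append]

lemma differOne_append_cons (a b : List Bool) (x : Bool) :
    DifferOne (a ++ x :: b) (a ++ (!x) :: b) := by
  refine ⟨by simp, ?_⟩
  rw [List.zipWith_append rfl]
  simp [List.count_replicate]

end DifferOne

section FibonacciCubeEdges

lemma IsFibStr.append_false_cons {a b : List Bool} (h : IsFibStr (a ++ true :: b)) :
    IsFibStr (a ++ false :: b) := by
  rw [isFibStr_append_cons] at h ⊢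
  exact ⟨h.1.left_of_append.append (List.IsChain.singleton false) (by simp),
    isFibStr_cons_false.2 h.2.tail⟩

lemma fibEdges_eq_image (n : ℕ) :
    fibEdges n = (markedFibStrings n).image fun p => cubeEdge p.1 p.2 := by
  ext e
  simp only [fibEdges, Finset.mem_image, Finset.mem_filter, Finset.mem_product, mem_fibStrings,
    Prod.exists]
  constructor
  · rintro ⟨u, v, ⟨⟨⟨hu, hfu⟩, hv, hfv⟩, hd⟩, rfl⟩
    obtain ⟨a, b, x, rfl, rfl⟩ := hd.exists_eq_append_cons
    simp only [List.length_append, List.length_cons] at hu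
    cases x
    · exact ⟨a, b, mem_markedFibStrings.2 ⟨by omega, hfv⟩, rfl⟩
    · exact ⟨a, b, mem_markedFibStrings.2 ⟨by omega, hfu⟩, Finset.pair_comm _ _⟩
  · rintro ⟨a, b, hab, rfl⟩
    obtain ⟨hlen, hfib⟩ := mem_markedFibStrings.1 hab
    exact ⟨a ++ false :: b, a ++ true :: b,
      ⟨⟨⟨by simp; omega, hfib.append_false_cons⟩, by simp; omega, hfib⟩,
        differOne_append_cons a b false⟩, rfl⟩

lemma card_fibEdges (n : ℕ) : (fibEdges n).card = fibConv n := by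
  rw [fibEdges_eq_image, Finset.card_image_of_injective _ cubeEdge_injective,
    card_markedFibStrings]

end FibonacciCubeEdges

section Reversal

lemma image_reverse_cubeEdge (a b : List Bool) :
    (cubeEdge a b).image List.reverse = cubeEdge b.reverse a.reverse := by
  simp [cubeEdge, Finset.image_insert]

lemma image_reverse_cubeEdge_eq_self_iff {a b : List Bool} :
    (cubeEdge a b).image List.reverse = cubeEdge a b ↔ b = a.reverse := by
  rw [image_reverse_cubeEdge]
  constructor
  · intro h
    exact (Prod.mk.inj (cubeEdge_injective h)).2.symm
  · rintro rfl
    rw [List.reverse_reverse]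

lemma image_reverse_involutive :
    Function.Involutive (Finset.image List.reverse : Finset (List Bool) → Finset (List Bool)) :=
  fun e => by simp [Finset.image_image]

lemma mapsTo_image_reverse_fibEdges (n : ℕ) :
    Set.MapsTo (Finset.image List.reverse) (fibEdges n : Set (Finset (List Bool)))
      (fibEdges n) := by
  intro e he
  simp only [Finset.mem_coe, fibEdges_eq_image, Finset.mem_image, Prod.exists] at he ⊢
  obtain ⟨a, b, hab, rfl⟩ := he
  obtain ⟨hlen, hfib⟩ := mem_markedFibStrings.1 hab
  refine ⟨b.reverse, a.reverse, mem_markedFibStrings.2 ⟨by simp; omega, ?_⟩,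
    (image_reverse_cubeEdge a b).symm⟩
  simpa using isFibStr_reverse.2 hfib

lemma isFibStr_append_true_cons_reverse {a : List Bool} :
    IsFibStr (a ++ true :: a.reverse) ↔ IsFibStr (a ++ [true]) := by
  rw [isFibStr_append_cons, ← isFibStr_reverse (l := true :: a.reverse)]
  simp

lemma card_filter_markedFibStrings_symmetric (n : ℕ) :
    ((markedFibStrings n).filter fun p => p.2 = p.1.reverse).card
      = if Even n then 0 else Nat.fib ((n + 1) / 2) := by
  obtain ⟨m, rfl | rfl⟩ := Nat.even_or_odd' n
  · rw [if_pos (even_two_mul m), Finset.card_eq_zero, Finset.filter_eq_empty_iff]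
    rintro ⟨a, b⟩ hab (rfl : b = a.reverse)
    have := (mem_markedFibStrings.1 hab).1
    simp only [List.length_reverse] at this
    omega
  · have hsymm : ((markedFibStrings (2 * m + 1)).filter fun p => p.2 = p.1.reverse)
        = (fibBefore m).image fun a => (a, a.reverse) := by
      ext ⟨a, b⟩
      simp only [Finset.mem_filter, Finset.mem_image, mem_markedFibStrings, mem_fibBefore,
        Prod.mk.injEq]
      constructor
      · rintro ⟨⟨hlen, hfib⟩, rfl⟩
        simp only [List.length_reverse] at hlen
        exact ⟨a, ⟨by omega, isFibStr_append_true_cons_reverse.1 hfib⟩, rfl, rfl⟩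
      · rintro ⟨a, ⟨hlen, hfib⟩, rfl, rfl⟩
        exact ⟨⟨by simp; omega, isFibStr_append_true_cons_reverse.2 hfib⟩, rfl⟩
    rw [hsymm, Finset.card_image_of_injective _ fun a a' h => (Prod.mk.inj h).1, card_fibBefore,
      if_neg (Nat.not_even_two_mul_add_one m), show (2 * m + 1 + 1) / 2 = m + 1 by omega]

lemma card_filter_fibEdges_image_reverse_eq_self (n : ℕ) :
    ((fibEdges n).filter fun e => e.image List.reverse = e).card
      = if Even n then 0 else Nat.fib ((n + 1) / 2) := by
  rw [fibEdges_eq_image, Finset.filter_image, Finset.card_image_of_injective _ cubeEdge_injective,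
    ← card_filter_markedFibStrings_symmetric]
  congr 1
  exact Finset.filter_congr fun _ _ => image_reverse_cubeEdge_eq_self_iff

end Reversal

/-- Edge orbits of the Fibonacci cube `Γₙ` under the reversal map, for `n ≥ 0`:
the number of orbits of size 1 equals `((1−(−1)ⁿ)/2)·F_{⌊(n+1)/2⌋}`; the number of orbits
of size 2 equals `(1/10)(n·F_{n+1} + 2(n+1)·Fₙ) − ((1−(−1)ⁿ)/4)·F_{⌊(n+1)/2⌋}`; and the
total number of orbits equals
`(1/10)(n·F_{n+1} + 2(n+1)·Fₙ) + ((1−(−1)ⁿ)/4)·F_{⌊(n+1)/2⌋}`. -/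
theorem fib_edge_orbits (n : ℕ) :
    (((((fibEdges n).image revEdgeOrbit).filter fun O => O.card = 1).card : ℚ)
        = (1 - (-1 : ℚ) ^ n) / 2 * (Nat.fib ((n + 1) / 2) : ℚ)) ∧
    (((((fibEdges n).image revEdgeOrbit).filter fun O => O.card = 2).card : ℚ)
        = (1 / 10) * ((n : ℚ) * (Nat.fib (n + 1) : ℚ) + 2 * ((n : ℚ) + 1) * (Nat.fib n : ℚ))
          - (1 - (-1 : ℚ) ^ n) / 4 * (Nat.fib ((n + 1) / 2) : ℚ)) ∧
    ((((fibEdges n).image revEdgeOrbit).card : ℚ)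
        = (1 / 10) * ((n : ℚ) * (Nat.fib (n + 1) : ℚ) + 2 * ((n : ℚ) + 1) * (Nat.fib n : ℚ))
          + (1 - (-1 : ℚ) ^ n) / 4 * (Nat.fib ((n + 1) / 2) : ℚ)) := by
  rw [show revEdgeOrbit = pairOrbit (Finset.image List.reverse) from rfl]
  have hfixed := card_filter_image_pairOrbit_card_eq_one (Finset.image List.reverse) (fibEdges n)
  have hedges := card_eq_card_fixed_add_two_mul image_reverse_involutive
    (mapsTo_image_reverse_fibEdges n)
  have horbits := card_image_pairOrbit (Finset.image List.reverse) (fibEdges n)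
  have hcount := five_mul_fibConv n
  rw [card_filter_fibEdges_image_reverse_eq_self] at hfixed hedges
  rw [card_fibEdges] at hedges
  replace hfixed := congrArg (Nat.cast : ℕ → ℚ) hfixed
  replace hedges := congrArg (Nat.cast : ℕ → ℚ) hedges
  replace horbits := congrArg (Nat.cast : ℕ → ℚ) horbits
  replace hcount := congrArg (Nat.cast : ℕ → ℚ) hcount
  rcases Nat.even_or_odd n with hn | hn
  · simp only [if_pos hn] at hfixed hedges
    rw [hn.neg_one_pow]
    push_cast at *
    refine ⟨?_, ?_, ?_⟩ <;> linarith
  · simp only [if_neg (Nat.not_even_iff_odd.2 hn)] at hfixed hedges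
    rw [hn.neg_one_pow]
    push_cast at *
    refine ⟨?_, ?_, ?_⟩ <;> linarith
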